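/- Let Γ and Λ be countable subgroups of Homeo(X), where X is the Cantor space, and let h be a homeomorphism of X realizing an orbit equivalence between R_Γ and R_Λ, i.e. (x, y) ∈ R_Γ ⇔ (h(x), h(y)) ∈ R_Λ for all x, y ∈ X. Then the pushforward map μ ↦ h_*μ is a bijection from M(Γ) onto M(Λ). -/

import Mathlib

/-! For `ℓ ∈ Λ` the conjugate `h⁻¹ ℓ h` moves every point within its `Γ`-orbit, so `X` splits
into countably many Borel pieces on each of which it agrees with a single element of `Γ`. Such a
map preserves every `Γ`-invariant measure `μ`, hence `h_*μ` is `Λ`-invariant. Applying this to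
`h⁻¹` gives the inverse of `μ ↦ h_*μ`. -/

open MeasureTheory Set

/-- The group structure on self-homeomorphisms of a topological space,
with `(f * g) x = f (g x)`. -/
instance Homeomorph.instGroupSelf {Y : Type*} [TopologicalSpace Y] : Group (Y ≃ₜ Y) where
  mul f g := g.trans f
  one := Homeomorph.refl Y
  inv := Homeomorph.symm
  mul_assoc := fun _ _ _ => rfl
  one_mul := fun _ => by ext x; rfl
  mul_one := fun _ => by ext x; rfl
  inv_mul_cancel := fun a => by ext x; exact a.symm_apply_apply x

/-- `Y` is a Cantor space: nonempty, compact, metrizable, totally disconnected and perfect. -/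
def IsCantorSpace (Y : Type*) [TopologicalSpace Y] : Prop :=
  Nonempty Y ∧ CompactSpace Y ∧ TopologicalSpace.MetrizableSpace Y ∧ TotallyDisconnectedSpace Y ∧
    Perfect (Set.univ : Set Y)

/-- `g` coincides piecewise, on a finite clopen partition of the space, with elements of `Γ`. -/
def PiecewiseIn {Y : Type*} [TopologicalSpace Y] (Γ : Subgroup (Y ≃ₜ Y)) (g : Y ≃ₜ Y) : Prop :=
  ∃ (n : ℕ) (U : Fin n → Set Y) (γ : Fin n → (Y ≃ₜ Y)),
    (∀ i, IsClopen (U i)) ∧ (∀ i, γ i ∈ Γ) ∧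
    Pairwise (Function.onFun Disjoint U) ∧ (⋃ i, U i) = Set.univ ∧
    (∀ i, ∀ x ∈ U i, g x = γ i x)

/-- A subgroup of `Homeo(Y)` is full if it contains every homeomorphism which coincides
piecewise, on a finite clopen partition, with elements of the subgroup. -/
def IsFullGroup {Y : Type*} [TopologicalSpace Y] (Γ : Subgroup (Y ≃ₜ Y)) : Prop :=
  ∀ g : Y ≃ₜ Y, PiecewiseIn Γ g → g ∈ Γ

/-- Every finitely generated subgroup is finite. -/
def IsLocallyFiniteGroup {Y : Type*} [TopologicalSpace Y] (Γ : Subgroup (Y ≃ₜ Y)) : Prop :=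
  ∀ S : Finset (Y ≃ₜ Y), (S : Set (Y ≃ₜ Y)) ⊆ (Γ : Set (Y ≃ₜ Y)) →
    ((Subgroup.closure (S : Set (Y ≃ₜ Y)) : Subgroup (Y ≃ₜ Y)) : Set (Y ≃ₜ Y)).Finite

/-- An ample group over `Y`: countable, locally finite, full, with clopen fixed-point sets. -/
def IsAmpleGroup {Y : Type*} [TopologicalSpace Y] (Γ : Subgroup (Y ≃ₜ Y)) : Prop :=
  (Γ : Set (Y ≃ₜ Y)).Countable ∧ IsLocallyFiniteGroup Γ ∧ IsFullGroup Γ ∧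
    ∀ γ ∈ Γ, IsClopen {x : Y | γ x = x}

/-- The action of `Γ` is minimal: every orbit is dense. -/
def IsMinimalGroup {Y : Type*} [TopologicalSpace Y] (Γ : Subgroup (Y ≃ₜ Y)) : Prop :=
  ∀ x : Y, Dense {y : Y | ∃ γ ∈ Γ, γ x = y}

/-- `M(Γ)`: the set of `Γ`-invariant Borel probability measures. -/
def InvProbMeasures {Y : Type*} [TopologicalSpace Y] [MeasurableSpace Y]
    (Γ : Subgroup (Y ≃ₜ Y)) : Set (Measure Y) :=
  {μ | IsProbabilityMeasure μ ∧ ∀ γ ∈ Γ, Measure.map (γ : Y → Y) μ = μ}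

/-- `A ∼_Γ B`: some element of `Γ` maps `A` onto `B`. -/
def ClopenEquiv {Y : Type*} [TopologicalSpace Y] (Γ : Subgroup (Y ≃ₜ Y)) (A B : Set Y) : Prop :=
  ∃ γ ∈ Γ, γ '' A = B

/-- `K` is `Γ`-thin: null for every `Γ`-invariant Borel probability measure. -/
def IsThin {Y : Type*} [TopologicalSpace Y] [MeasurableSpace Y]
    (Γ : Subgroup (Y ≃ₜ Y)) (K : Set Y) : Prop :=
  ∀ μ ∈ InvProbMeasures Γ, μ K = 0

/-- `A` is a subset of `K` which is clopen in the subspace topology of `K`. -/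
def IsClopenIn {Y : Type*} [TopologicalSpace Y] (K A : Set Y) : Prop :=
  A ⊆ K ∧ IsClopen ((Subtype.val ⁻¹' A) : Set K)

/-- `K` is `Γ`-étale: `K` is closed and for every `γ ∈ Γ` and every `A ⊆ K` clopen in `K`,
`γ(A) ∩ K` is clopen in `K`. -/
def IsEtale {Y : Type*} [TopologicalSpace Y] (Γ : Subgroup (Y ≃ₜ Y)) (K : Set Y) : Prop :=
  IsClosed K ∧ ∀ γ ∈ Γ, ∀ A : Set Y, IsClopenIn K A → IsClopenIn K ((γ : Y ≃ₜ Y) '' A ∩ K)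

/-- `K` is `Γ`-malleable: closed, `Γ`-thin and `Γ`-étale. -/
def IsMalleable {Y : Type*} [TopologicalSpace Y] [MeasurableSpace Y]
    (Γ : Subgroup (Y ≃ₜ Y)) (K : Set Y) : Prop :=
  IsClosed K ∧ IsThin Γ K ∧ IsEtale Γ K

open scoped Classical in
/-- The induced map `γ_K : K → K`:  `γ_K x = γ x` if `γ x ∈ K`, and `γ_K x = x` otherwise. -/
noncomputable def inducedMap {Y : Type*} [TopologicalSpace Y] (γ : Y ≃ₜ Y) (K : Set Y) :
    K → K :=
  fun x => if h : (γ (x : Y)) ∈ K then ⟨γ (x : Y), h⟩ else x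

/-- `Γ_K`: the set of homeomorphisms of `K` which are restrictions of elements of `Γ`
mapping `K` onto itself. -/
def restrGroup {Y : Type*} [TopologicalSpace Y] (Γ : Subgroup (Y ≃ₜ Y)) (K : Set Y) :
    Set ((K : Set Y) ≃ₜ (K : Set Y)) :=
  {g | ∃ γ ∈ Γ, (γ : Y ≃ₜ Y) '' K = K ∧ ∀ x : K, (g x : Y) = γ (x : Y)}

/-- The orbit equivalence relation `R_Γ` of a subgroup of `Homeo(Y)`. -/
def orbitRelOf {Y : Type*} [TopologicalSpace Y] (Γ : Subgroup (Y ≃ₜ Y)) (x y : Y) : Prop :=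
  ∃ γ ∈ Γ, γ x = y

/-- `R_Γ(K, Δ)`: the smallest equivalence relation containing `R_Γ` together with all pairs
`(x, δ x)` for `x ∈ K` and `δ ∈ Δ`, where `Δ` is a subgroup of `Homeo(K)`. -/
def extOrbitRel {Y : Type*} [TopologicalSpace Y] (Γ : Subgroup (Y ≃ₜ Y)) (K : Set Y)
    (Δ : Set ((K : Set Y) ≃ₜ (K : Set Y))) (x y : Y) : Prop :=
  Relation.EqvGen (fun a b => orbitRelOf Γ a b ∨ ∃ ha : a ∈ K, ∃ δ ∈ Δ, ((δ ⟨a, ha⟩ : K) : Y) = b) x y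

/-- Two relations on `Y` are orbit equivalent if some homeomorphism of `Y` carries one
to the other. -/
def OrbitEquivalent {Y : Type*} [TopologicalSpace Y] (R S : Y → Y → Prop) : Prop :=
  ∃ g : Y ≃ₜ Y, ∀ x y : Y, R x y ↔ S (g x) (g y)

/-- A unit system `(𝒜, Δ)`: a Boolean subalgebra `𝒜` of the clopen subsets of `Y`
together with a subgroup `Δ ≤ Homeo(Y)` satisfying the compatibility conditions. -/
structure IsUnitSystem {Y : Type*} [TopologicalSpace Y] (𝒜 : Set (Set Y))
    (Δ : Subgroup (Y ≃ₜ Y)) : Prop where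
  clopen : ∀ A ∈ 𝒜, IsClopen A
  empty_mem : (∅ : Set Y) ∈ 𝒜
  compl_mem : ∀ A ∈ 𝒜, Aᶜ ∈ 𝒜
  inter_mem : ∀ A ∈ 𝒜, ∀ B ∈ 𝒜, A ∩ B ∈ 𝒜
  maps : ∀ δ ∈ Δ, ∀ A ∈ 𝒜, (δ : Y ≃ₜ Y) '' A ∈ 𝒜
  eval_injective : ∀ δ ∈ Δ, (∀ A ∈ 𝒜, (δ : Y ≃ₜ Y) '' A = A) → δ = 1
  fixed_mem : ∀ δ ∈ Δ, {x : Y | δ x = x} ∈ 𝒜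
  full : ∀ g : Y ≃ₜ Y, (∃ (n : ℕ) (U : Fin n → Set Y) (γ : Fin n → (Y ≃ₜ Y)),
      (∀ i, U i ∈ 𝒜) ∧ (∀ i, γ i ∈ Δ) ∧ Pairwise (Function.onFun Disjoint U) ∧
      (⋃ i, U i) = Set.univ ∧ (∀ i, ∀ x ∈ U i, g x = γ i x)) → g ∈ Δ

/-- An atom of a (finite) Boolean algebra of sets. -/
def IsAtomOf {Y : Type*} (𝒜 : Set (Set Y)) (A : Set Y) : Prop :=
  A ∈ 𝒜 ∧ A ≠ ∅ ∧ ∀ B ∈ 𝒜, B ⊆ A → B = ∅ ∨ B = A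

/-- A finite unit system `(𝒜, Δ)` is `K`-compatible if whenever an element of `Δ` maps an
atom `A` to an atom `B` and both meet `K`, it maps `K ∩ A` onto `K ∩ B`. -/
def IsKCompatible {Y : Type*} [TopologicalSpace Y] (K : Set Y) (𝒜 : Set (Set Y))
    (Δ : Subgroup (Y ≃ₜ Y)) : Prop :=
  ∀ A B : Set Y, IsAtomOf 𝒜 A → IsAtomOf 𝒜 B → ∀ δ ∈ Δ, (δ : Y ≃ₜ Y) '' A = B →
    (K ∩ A).Nonempty → (K ∩ B).Nonempty → (δ : Y ≃ₜ Y) '' (K ∩ A) = K ∩ B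

theorem MeasureTheory.Measure.map_eq_self_of_forall_exists_apply_eq {α : Type*}
    [MeasurableSpace α] [MeasurableEq α] {μ : Measure α} {g : ℕ → α ≃ᵐ α}
    (hg : ∀ n, μ.map (g n) = μ) (f : α ≃ᵐ α) (hf : ∀ x, ∃ n, g n x = f x) :
    μ.map f = μ := by
  set A := disjointed fun n => {x | f x = g n x}
  have hA_meas : ∀ n, MeasurableSet (A n) :=
    .disjointed fun n => measurableSet_eq_fun f.measurable (g n).measurable
  have hA_cover : ⋃ n, A n = univ := by
    rw [iUnion_disjointed, eq_univ_iff_forall]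
    exact fun x => mem_iUnion.2 ((hf x).imp fun _ h => h.symm)
  have hA_disj : Pairwise (Function.onFun Disjoint A) := disjoint_disjointed _
  have hf_eq : ∀ n, EqOn f (g n) (A n) := fun n _ hx => disjointed_subset _ n hx
  have hfA_meas : ∀ n, MeasurableSet (f '' A n) := fun n => f.measurableSet_image.2 (hA_meas n)
  have hfA_cover : ⋃ n, f '' A n = univ := by
    rw [← image_iUnion, hA_cover, image_univ, f.surjective.range_eq]
  have hfA_disj : Pairwise (Function.onFun Disjoint fun n => f '' A n) :=
    fun m n hmn => (disjoint_image_iff f.injective).2 (hA_disj hmn)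
  calc μ.map f = (Measure.sum fun n => μ.restrict (A n)).map f := by
        rw [← Measure.restrict_iUnion hA_disj hA_meas, hA_cover, Measure.restrict_univ]
    _ = Measure.sum fun n => (μ.restrict (A n)).map (g n) := by
        rw [Measure.map_sum f.measurable.aemeasurable]
        exact congrArg _ <| funext fun n =>
          Measure.map_congr ((ae_restrict_mem (hA_meas n)).mono (hf_eq n))
    _ = Measure.sum fun n => μ.restrict (f '' A n) := by
        refine congrArg _ <| funext fun n => ?_
        conv_rhs => rw [(hf_eq n).image_eq, ← hg n, MeasurableEquiv.restrict_map,
          (g n).injective.preimage_image]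
    _ = μ := by rw [← Measure.restrict_iUnion hfA_disj hfA_meas, hfA_cover, Measure.restrict_univ]

theorem map_mem_invProbMeasures_of_orbitRelOf {X : Type*} [TopologicalSpace X]
    [MeasurableSpace X] [BorelSpace X] [MeasurableEq X] {Γ Λ : Subgroup (X ≃ₜ X)}
    (hΓ : (Γ : Set (X ≃ₜ X)).Countable) {h : X ≃ₜ X}
    (horb : ∀ x y : X, orbitRelOf Λ (h x) (h y) → orbitRelOf Γ x y)
    {μ : Measure X} (hμ : μ ∈ InvProbMeasures Γ) :
    μ.map h ∈ InvProbMeasures Λ := by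
  obtain ⟨_, hinv⟩ := hμ
  refine ⟨Measure.isProbabilityMeasure_map h.measurable.aemeasurable, fun ℓ hℓ => ?_⟩
  obtain ⟨γ, hγ⟩ := hΓ.exists_eq_range ⟨1, Γ.one_mem⟩
  have hγΓ : ∀ n, γ n ∈ (Γ : Set (X ≃ₜ X)) := fun n => hγ ▸ mem_range_self n
  set f : X ≃ₜ X := h.trans (ℓ.trans h.symm)
  have hf : Measure.map f μ = μ := by
    refine Measure.map_eq_self_of_forall_exists_apply_eq (g := fun n => (γ n).toMeasurableEquiv)
      (fun n => hinv _ (hγΓ n)) f.toMeasurableEquiv fun x => ?_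
    obtain ⟨δ, hδ, hδx⟩ := horb x (f x) ⟨ℓ, hℓ, (h.apply_symm_apply _).symm⟩
    obtain ⟨n, rfl⟩ : δ ∈ range γ := hγ ▸ hδ
    exact ⟨n, hδx⟩
  have hcomm : (ℓ : X → X) ∘ h = h ∘ f := funext fun x => (h.apply_symm_apply _).symm
  rw [Measure.map_map ℓ.measurable h.measurable, hcomm,
    ← Measure.map_map h.measurable f.measurable, hf]

/-- an orbit equivalence pushes invariant measures to invariant measures,
bijectively. -/
theorem orbit_equivalence_pushforward_measures {X : Type*} [TopologicalSpace X]
    [MeasurableSpace X] [BorelSpace X] (hX : IsCantorSpace X)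
    (Γ Λ : Subgroup (X ≃ₜ X))
    (hΓc : (Γ : Set (X ≃ₜ X)).Countable) (hΛc : (Λ : Set (X ≃ₜ X)).Countable)
    (h : X ≃ₜ X)
    (horb : ∀ x y : X, orbitRelOf Γ x y ↔ orbitRelOf Λ (h x) (h y)) :
    Set.BijOn (fun μ : MeasureTheory.Measure X => MeasureTheory.Measure.map (h : X → X) μ)
      (InvProbMeasures Γ) (InvProbMeasures Λ) := by
  -- compact and metrizable, hence second countable and Hausdorff, which gives `MeasurableEq X`
  obtain ⟨-, _, _, -, -⟩ := hX
  have hΛΓ : ∀ x y : X, orbitRelOf Γ (h.symm x) (h.symm y) → orbitRelOf Λ x y := fun x y hxy => by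
    simpa only [h.apply_symm_apply] using (horb _ _).1 hxy
  refine Set.InvOn.bijOn (f' := fun ν => ν.map h.symm)
    ⟨fun μ _ => h.toMeasurableEquiv.map_symm_map, fun ν _ => h.toMeasurableEquiv.map_map_symm⟩
    (fun μ => map_mem_invProbMeasures_of_orbitRelOf hΓc fun x y => (horb x y).2)
    (fun ν => map_mem_invProbMeasures_of_orbitRelOf hΛc hΛΓ)
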